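/- Let m ≥ 1 be an integer and let D be a minimum dominating set of K_m ⊠ S, where S is a starlike tree in which all branch orders are congruent to 2 modulo 3. Then, writing c for the center of S and P_{n_i} for the branches of S: D ∩ (V(K_m) × {c}) = ∅, and for every branch i, the restriction D ∩ (V(K_m) × V(P_{n_i})) is a minimum dominating set of the subgraph K_m ⊠ P_{n_i} (so it has cardinality ⌈n_i/3⌉). -/

import Mathlib

open SimpleGraph Finset

/-- `D` is a dominating set of `G`: every vertex is in `D` or adjacent to a vertex of `D`. -/
def SimpleGraph.IsDominatingSet {V : Type*} (G : SimpleGraph V) (D : Set V) : Prop :=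
  ∀ v : V, v ∈ D ∨ ∃ u ∈ D, G.Adj u v

/-- The domination number of a finite graph. -/
noncomputable def SimpleGraph.dominationNumber {V : Type*} [Fintype V]
    (G : SimpleGraph V) : ℕ :=
  sInf {k | ∃ D : Finset V, D.card = k ∧ G.IsDominatingSet ↑D}

/-- The bondage number of a finite graph: the least size of a set of edges whose removal
increases the domination number. -/
noncomputable def SimpleGraph.bondageNumber {V : Type*} [Fintype V]
    (G : SimpleGraph V) : ℕ :=
  sInf {k | ∃ Z : Finset (Sym2 V), Z.card = k ∧ (↑Z : Set (Sym2 V)) ⊆ G.edgeSet ∧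
    G.dominationNumber < (G.deleteEdges ↑Z).dominationNumber}

/-- The strong product of two simple graphs. -/
def SimpleGraph.strongProd {V W : Type*} (G : SimpleGraph V) (H : SimpleGraph W) :
    SimpleGraph (V × W) :=
  SimpleGraph.fromRel (fun a b =>
    (a.1 = b.1 ∧ H.Adj a.2 b.2) ∨ (G.Adj a.1 b.1 ∧ a.2 = b.2) ∨
      (G.Adj a.1 b.1 ∧ H.Adj a.2 b.2))

infixl:70 " ⊠ " => SimpleGraph.strongProd

/-- The starlike tree `S(n₁, …, n_l)`: a center vertex `none` together with `l` disjoint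
paths (the branches), where the `j`-th vertex of the `i`-th branch is `some ⟨i, j⟩` and
the first vertex `some ⟨i, 0⟩` of each branch is adjacent to the center. -/
def starlikeTree (l : ℕ) (nb : Fin l → ℕ) :
    SimpleGraph (Option ((i : Fin l) × Fin (nb i))) :=
  SimpleGraph.fromRel (fun a b =>
    (∃ (i : Fin l) (j : Fin (nb i)), a = none ∧ b = some ⟨i, j⟩ ∧ (j : ℕ) = 0) ∨
    (∃ (i : Fin l) (j k : Fin (nb i)),
      a = some ⟨i, j⟩ ∧ b = some ⟨i, k⟩ ∧ (j : ℕ) + 1 = (k : ℕ)))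

section Aux

lemma top_strongProd_adj {V W : Type*} (H : SimpleGraph W) (a b : V × W) :
    ((⊤ : SimpleGraph V) ⊠ H).Adj a b ↔ a ≠ b ∧ (a.2 = b.2 ∨ H.Adj a.2 b.2) := by
  simp only [SimpleGraph.strongProd, fromRel_adj, top_adj]
  constructor
  · rintro ⟨hne, h⟩
    refine ⟨hne, ?_⟩
    rcases h with (⟨_, h⟩|⟨_, h⟩|⟨_, h⟩)|(⟨_, h⟩|⟨_, h⟩|⟨_, h⟩)
    · exact Or.inr h
    · exact Or.inl h
    · exact Or.inr h
    · exact Or.inr h.symm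
    · exact Or.inl h.symm
    · exact Or.inr h.symm
  · rintro ⟨hne, h | h⟩
    · have h1 : a.1 ≠ b.1 := fun h1 => hne (Prod.ext h1 h)
      exact ⟨hne, Or.inl (Or.inr (Or.inl ⟨h1, h⟩))⟩
    · by_cases h1 : a.1 = b.1
      · exact ⟨hne, Or.inl (Or.inl ⟨h1, h⟩)⟩
      · exact ⟨hne, Or.inl (Or.inr (Or.inr ⟨h1, h⟩))⟩

lemma top_strongProd_isDominating_iff {V W : Type*} [Nonempty V] (H : SimpleGraph W)
    (D : Finset (V × W)) :
    ((⊤ : SimpleGraph V) ⊠ H).IsDominatingSet ↑D ↔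
      ∀ w : W, ∃ d ∈ D, d.2 = w ∨ H.Adj d.2 w := by
  constructor
  · intro h w
    obtain ⟨u⟩ := ‹Nonempty V›
    rcases h (u, w) with hin | ⟨d, hd, hadj⟩
    · exact ⟨(u, w), by simpa using hin, Or.inl rfl⟩
    · exact ⟨d, by simpa using hd, ((top_strongProd_adj H d (u, w)).1 hadj).2⟩
  · intro h v
    rcases h v.2 with ⟨d, hd, hcl⟩
    by_cases hdv : d = v
    · exact Or.inl (by simpa [hdv] using hd)
    · exact Or.inr ⟨d, by simpa using hd, (top_strongProd_adj H d v).2 ⟨hdv, hcl⟩⟩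

lemma dominationNumber_le' {V : Type*} [Fintype V] (G : SimpleGraph V)
    (D : Finset V) (hD : G.IsDominatingSet ↑D) : G.dominationNumber ≤ D.card :=
  Nat.sInf_le ⟨D, rfl, hD⟩

lemma le_dominationNumber' {V : Type*} [Fintype V] (G : SimpleGraph V) (k : ℕ)
    (h : ∀ D : Finset V, G.IsDominatingSet ↑D → k ≤ D.card) : k ≤ G.dominationNumber := by
  refine le_csInf ⟨_, ⟨univ, rfl, fun v => Or.inl (by simp)⟩⟩ ?_
  rintro b ⟨E, rfl, hE⟩
  exact h E hE

lemma card_le_three_mul {α : Type*} [DecidableEq α] (B : Finset α) (g : α → ℕ) (s : Finset ℕ)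
    (H : ∀ j ∈ s, ∃ b ∈ B, g b ≤ j + 1 ∧ j ≤ g b + 1) : s.card ≤ 3 * B.card := by
  classical
  rcases s.eq_empty_or_nonempty with rfl | ⟨j₀, hj₀⟩
  · simp
  obtain ⟨b₀, hb₀, -⟩ := H j₀ hj₀
  set f : ℕ → α := fun j =>
    if h : ∃ b ∈ B, g b ≤ j + 1 ∧ j ≤ g b + 1 then h.choose else b₀ with hf
  have hprop : ∀ j ∈ s, f j ∈ B ∧ g (f j) ≤ j + 1 ∧ j ≤ g (f j) + 1 := by
    intro j hj
    simp only [hf, dif_pos (H j hj)]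
    exact (H j hj).choose_spec
  refine Finset.card_le_mul_card_image_of_maps_to (fun j hj => (hprop j hj).1) 3 ?_
  intro b hb
  have hsub : {j ∈ s | f j = b} ⊆ ({g b - 1, g b, g b + 1} : Finset ℕ) := by
    intro j hj
    rw [Finset.mem_filter] at hj
    obtain ⟨hjs, hjb⟩ := hj
    have := (hprop j hjs).2
    rw [hjb] at this
    simp only [Finset.mem_insert, Finset.mem_singleton]
    omega
  refine le_trans (Finset.card_le_card hsub) ?_
  refine le_trans (Finset.card_insert_le _ _) ?_
  have : ({g b, g b + 1} : Finset ℕ).card ≤ 2 :=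
    le_trans (Finset.card_insert_le _ _) (by simp)
  omega

lemma card_filter_mod3 (n : ℕ) :
    ((univ : Finset (Fin n)).filter (fun j : Fin n => (j : ℕ) % 3 = 0)).card = (n + 2) / 3 := by
  rw [← Finset.card_range ((n + 2) / 3)]
  refine Finset.card_bij' (fun (j : Fin n) (_ : j ∈ _) => (j : ℕ) / 3)
    (fun k hk => (⟨3 * k, by rw [Finset.mem_range] at hk; omega⟩ : Fin n)) ?_ ?_ ?_ ?_
  · intro a ha
    rw [Finset.mem_filter] at ha
    rw [Finset.mem_range]
    show (a : ℕ) / 3 < (n + 2) / 3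
    have := a.isLt
    omega
  · intro k hk
    rw [Finset.mem_range] at hk
    rw [Finset.mem_filter]
    refine ⟨Finset.mem_univ _, ?_⟩
    show (3 * k) % 3 = 0
    omega
  · intro a ha
    rw [Finset.mem_filter] at ha
    obtain ⟨-, h⟩ := ha
    apply Fin.ext
    show 3 * ((a : ℕ) / 3) = (a : ℕ)
    omega
  · intro k hk
    rw [Finset.mem_range] at hk
    show (3 * k) / 3 = k
    omega

lemma some_sigma_inj {l : ℕ} {nb : Fin l → ℕ} {i : Fin l} {j k : Fin (nb i)}
    (h : (some ⟨i, j⟩ : Option ((i : Fin l) × Fin (nb i))) = some ⟨i, k⟩) : j = k := by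
  obtain ⟨-, h2⟩ := Sigma.mk.inj_iff.1 (Option.some.inj h)
  exact eq_of_heq h2

lemma starlike_adj_center {l : ℕ} {nb : Fin l → ℕ} (i : Fin l) (j : Fin (nb i))
    (hj : (j : ℕ) = 0) : (starlikeTree l nb).Adj (some ⟨i, j⟩) none := by
  rw [starlikeTree, fromRel_adj]
  exact ⟨by simp, Or.inr (Or.inl ⟨i, j, rfl, rfl, hj⟩)⟩

lemma starlike_adj_branch {l : ℕ} {nb : Fin l → ℕ} (i : Fin l) (j k : Fin (nb i))
    (h : (j : ℕ) + 1 = k ∨ (k : ℕ) + 1 = j) :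
    (starlikeTree l nb).Adj (some ⟨i, j⟩) (some ⟨i, k⟩) := by
  rw [starlikeTree, fromRel_adj]
  constructor
  · intro heq
    have := some_sigma_inj heq
    cases this
    omega
  · rcases h with h | h
    · exact Or.inl (Or.inr ⟨i, j, k, rfl, rfl, h⟩)
    · exact Or.inr (Or.inr ⟨i, k, j, rfl, rfl, h⟩)

lemma starlike_adj_inv {l : ℕ} {nb : Fin l → ℕ} {w : Option ((i : Fin l) × Fin (nb i))}
    {i : Fin l} {j : Fin (nb i)} (h : (starlikeTree l nb).Adj w (some ⟨i, j⟩)) :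
    (w = none ∧ (j : ℕ) = 0) ∨
      ∃ k : Fin (nb i), w = some ⟨i, k⟩ ∧ ((j : ℕ) + 1 = k ∨ (k : ℕ) + 1 = j) := by
  rw [starlikeTree, fromRel_adj] at h
  obtain ⟨hne, h | h⟩ := h
  · rcases h with ⟨i', j', h1, h2, h3⟩ | ⟨i', j', k', h1, h2, h3⟩
    · obtain ⟨rfl, hj⟩ := Sigma.mk.inj_iff.1 (Option.some.inj h2)
      exact Or.inl ⟨h1, by rw [eq_of_heq hj]; exact h3⟩
    · obtain ⟨rfl, hj⟩ := Sigma.mk.inj_iff.1 (Option.some.inj h2)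
      have hk : j = k' := eq_of_heq hj
      cases hk
      exact Or.inr ⟨j', h1, Or.inr h3⟩
  · rcases h with ⟨i', j', h1, h2, h3⟩ | ⟨i', j', k', h1, h2, h3⟩
    · exact absurd h1 (by simp)
    · obtain ⟨rfl, hj⟩ := Sigma.mk.inj_iff.1 (Option.some.inj h1)
      have hk : j = j' := eq_of_heq hj
      cases hk
      exact Or.inr ⟨k', h2, Or.inl h3⟩

lemma branch_map_inj {m l : ℕ} {nb : Fin l → ℕ} (i : Fin l) :
    Function.Injective (fun q : Fin m × Fin (nb i) =>
      ((q.1, some ⟨i, q.2⟩) : Fin m × Option ((i : Fin l) × Fin (nb i)))) := by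
  intro a b h
  rw [Prod.ext_iff] at h
  exact Prod.ext h.1 (some_sigma_inj h.2)

lemma card_partition {m l : ℕ} {nb : Fin l → ℕ}
    (D : Finset (Fin m × Option ((i : Fin l) × Fin (nb i)))) :
    D.card = (D.filter (fun p => p.2 = none)).card +
      ∑ i : Fin l, (Finset.univ.filter
        (fun q : Fin m × Fin (nb i) => (q.1, some ⟨i, q.2⟩) ∈ D)).card := by
  classical
  have h1 : D.card = ∑ o : Option (Fin l),
      (D.filter (fun p => p.2.map Sigma.fst = o)).card :=
    Finset.card_eq_sum_card_fiberwise (fun p _ => Finset.mem_univ _)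
  rw [h1, Fintype.sum_option]
  congr 1
  · congr 1
    ext p
    simp [Option.map_eq_none_iff]
  · refine Finset.sum_congr rfl (fun i _ => ?_)
    have himg : (Finset.univ.filter
          (fun q : Fin m × Fin (nb i) => (q.1, some ⟨i, q.2⟩) ∈ D)).image
          (fun q => (q.1, some ⟨i, q.2⟩)) =
        D.filter (fun p => p.2.map Sigma.fst = some i) := by
      ext p
      simp only [Finset.mem_image, Finset.mem_filter, Finset.mem_univ, true_and]
      constructor
      · rintro ⟨q, hq, rfl⟩
        exact ⟨hq, rfl⟩
      · rintro ⟨hpD, hmap⟩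
        obtain ⟨s, hs, hfst⟩ := Option.map_eq_some_iff.1 hmap
        obtain ⟨i', j⟩ := s
        cases hfst
        refine ⟨(p.1, j), ?_, ?_⟩
        · show (p.1, some ⟨i', j⟩) ∈ D
          rw [← hs]
          exact hpD
        · exact Prod.ext rfl hs.symm
    rw [← himg, Finset.card_image_of_injective _ (branch_map_inj i)]

end Aux

lemma pathProd_dominationNumber {m n : ℕ} (hm : 1 ≤ m) (hn : n % 3 = 2) :
    ((⊤ : SimpleGraph (Fin m)) ⊠ pathGraph n).dominationNumber = (n + 2) / 3 := by
  haveI : Nonempty (Fin m) := ⟨⟨0, hm⟩⟩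
  set u₀ : Fin m := ⟨0, hm⟩
  apply le_antisymm
  · set E := ((univ : Finset (Fin n)).filter (fun j : Fin n => (j : ℕ) % 3 = 0)).image
      (fun j => (u₀, j)) with hE
    have hmemE : ∀ j : Fin n, (j : ℕ) % 3 = 0 → (u₀, j) ∈ E := by
      intro j hj
      rw [hE, Finset.mem_image]
      exact ⟨j, Finset.mem_filter.2 ⟨Finset.mem_univ _, hj⟩, rfl⟩
    have hEdom : ((⊤ : SimpleGraph (Fin m)) ⊠ pathGraph n).IsDominatingSet ↑E := by
      rw [top_strongProd_isDominating_iff]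
      intro w
      have hw := w.isLt
      by_cases h0 : (w : ℕ) % 3 = 0
      · exact ⟨(u₀, w), hmemE w h0, Or.inl rfl⟩
      by_cases h1 : (w : ℕ) % 3 = 1
      · refine ⟨(u₀, ⟨(w : ℕ) - 1, by omega⟩), hmemE _ (by simp; omega), Or.inr ?_⟩
        rw [pathGraph_adj]
        left; simp; omega
      · have h2 : (w : ℕ) % 3 = 2 := by omega
        refine ⟨(u₀, ⟨(w : ℕ) + 1, by omega⟩), hmemE _ (by simp; omega), Or.inr ?_⟩
        rw [pathGraph_adj]
        right; simp
    refine le_trans (dominationNumber_le' _ E hEdom) ?_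
    rw [hE, Finset.card_image_of_injective _ (fun a b h => congrArg Prod.snd h),
      card_filter_mod3]
  · refine le_dominationNumber' _ _ (fun D' hD' => ?_)
    rw [top_strongProd_isDominating_iff] at hD'
    have hcount : (Finset.range n).card ≤ 3 * D'.card := by
      refine card_le_three_mul D' (fun d => (d.2 : ℕ)) _ (fun j hj => ?_)
      rw [Finset.mem_range] at hj
      obtain ⟨d, hd, hcl⟩ := hD' ⟨j, hj⟩
      refine ⟨d, hd, ?_⟩
      show (d.2 : ℕ) ≤ j + 1 ∧ j ≤ (d.2 : ℕ) + 1
      rcases hcl with h | h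
      · rw [h]
        simp
      · rw [pathGraph_adj] at h
        simp at h
        omega
    rw [Finset.card_range] at hcount
    omega

/-- **Lemma (Claims 2.1 and 2.2).** Let `m ≥ 1` and `n ≥ 3` be integers with
`n ≡ 1 (mod 3)`, and let `D` be a minimum dominating set of `K_m ⊠ S`, where
`S = S(n₁, …, n_l)` is a starlike tree (with center `c = none`) all of whose branch
orders are `≡ 2 (mod 3)`.  Then `D ∩ (V(K_m) × {c}) = ∅`, and for every branch `i` the
restriction of `D` to `V(K_m) × V(P_{n_i})` (viewed in `K_m ⊠ P_{n_i}` via the bijection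
`(u, j) ↦ (u, some ⟨i, j⟩)`) is a minimum dominating set of `K_m ⊠ P_{n_i}`, of
cardinality `⌈n_i/3⌉`. -/
theorem min_dominating_strongProd_starlikeTree_mod_two (m n : ℕ) (hm : 1 ≤ m)
    (hn : 3 ≤ n) (hn1 : n % 3 = 1)
    (l : ℕ) (hl : 1 ≤ l) (nb : Fin l → ℕ) (hnb : ∀ i, nb i % 3 = 2)
    (D : Finset (Fin m × Option ((i : Fin l) × Fin (nb i))))
    (hdom : ((⊤ : SimpleGraph (Fin m)) ⊠ starlikeTree l nb).IsDominatingSet ↑D)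
    (hmin : D.card = ((⊤ : SimpleGraph (Fin m)) ⊠ starlikeTree l nb).dominationNumber) :
    D.filter (fun p => p.2 = none) = ∅ ∧
    ∀ i : Fin l,
      ((⊤ : SimpleGraph (Fin m)) ⊠ pathGraph (nb i)).IsDominatingSet
        ↑(Finset.univ.filter
          (fun q : Fin m × Fin (nb i) => (q.1, some ⟨i, q.2⟩) ∈ D)) ∧
      (Finset.univ.filter
          (fun q : Fin m × Fin (nb i) => (q.1, some ⟨i, q.2⟩) ∈ D)).card =
        ((⊤ : SimpleGraph (Fin m)) ⊠ pathGraph (nb i)).dominationNumber ∧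
      (Finset.univ.filter
          (fun q : Fin m × Fin (nb i) => (q.1, some ⟨i, q.2⟩) ∈ D)).card =
        (nb i + 2) / 3 := by
  classical
  haveI : Nonempty (Fin m) := ⟨⟨0, hm⟩⟩
  set u₀ : Fin m := ⟨0, hm⟩ with hu₀
  set S := starlikeTree l nb with hS
  -- branch restriction of an arbitrary finset
  set Di : (D' : Finset (Fin m × Option ((i : Fin l) × Fin (nb i)))) → (i : Fin l) →
      Finset (Fin m × Fin (nb i)) := fun D' i =>
    Finset.univ.filter (fun q : Fin m × Fin (nb i) => (q.1, some ⟨i, q.2⟩) ∈ D') with hDi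
  -- lower bound per branch, for any dominating set
  have hlow : ∀ D' : Finset (Fin m × Option ((i : Fin l) × Fin (nb i))),
      ((⊤ : SimpleGraph (Fin m)) ⊠ S).IsDominatingSet ↑D' →
      ∀ i : Fin l, (nb i + 2) / 3 ≤ (Di D' i).card := by
    intro D' hD' i
    rw [top_strongProd_isDominating_iff] at hD'
    have hcount : (Finset.Ico 1 (nb i)).card ≤ 3 * (Di D' i).card := by
      refine card_le_three_mul _ (fun q => (q.2 : ℕ)) _ (fun j hj => ?_)
      rw [Finset.mem_Ico] at hj
      obtain ⟨d, hd, hcl⟩ := hD' (some ⟨i, ⟨j, hj.2⟩⟩)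
      rcases hcl with h | h
      · refine ⟨(d.1, ⟨j, hj.2⟩), ?_, by simp⟩
        rw [hDi, Finset.mem_filter]
        refine ⟨Finset.mem_univ _, ?_⟩
        show (d.1, some ⟨i, ⟨j, hj.2⟩⟩) ∈ D'
        rw [← h]
        exact hd
      · rcases starlike_adj_inv h with ⟨-, hj0⟩ | ⟨k, hdk, hadj⟩
        · simp at hj0
          omega
        · refine ⟨(d.1, k), ?_, by simp at hadj ⊢; omega⟩
          rw [hDi, Finset.mem_filter]
          refine ⟨Finset.mem_univ _, ?_⟩
          show (d.1, some ⟨i, k⟩) ∈ D'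
          rw [← hdk]
          exact hd
    rw [Nat.card_Ico] at hcount
    have := hnb i
    omega
  -- upper bound: explicit dominating set
  have hub : ((⊤ : SimpleGraph (Fin m)) ⊠ S).dominationNumber ≤ ∑ i : Fin l, (nb i + 2) / 3 := by
    set E : Finset (Fin m × Option ((i : Fin l) × Fin (nb i))) :=
      Finset.univ.biUnion (fun i : Fin l =>
        ((univ : Finset (Fin (nb i))).filter (fun j : Fin (nb i) => (j : ℕ) % 3 = 0)).image
          (fun j => (u₀, some ⟨i, j⟩))) with hE
    have hmemE : ∀ (i : Fin l) (j : Fin (nb i)), (j : ℕ) % 3 = 0 → (u₀, some ⟨i, j⟩) ∈ E := by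
      intro i j hj
      rw [hE, Finset.mem_biUnion]
      exact ⟨i, Finset.mem_univ _, Finset.mem_image.2
        ⟨j, Finset.mem_filter.2 ⟨Finset.mem_univ _, hj⟩, rfl⟩⟩
    have hEdom : ((⊤ : SimpleGraph (Fin m)) ⊠ S).IsDominatingSet ↑E := by
      rw [top_strongProd_isDominating_iff]
      rintro (_ | ⟨i, j⟩)
      · -- center
        have hpos : 0 < nb ⟨0, hl⟩ := by have := hnb ⟨0, hl⟩; omega
        refine ⟨(u₀, some ⟨⟨0, hl⟩, ⟨0, hpos⟩⟩), hmemE _ _ (by simp), Or.inr ?_⟩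
        exact starlike_adj_center _ _ rfl
      · have hj := j.isLt
        by_cases h0 : (j : ℕ) % 3 = 0
        · exact ⟨(u₀, some ⟨i, j⟩), hmemE i j h0, Or.inl rfl⟩
        by_cases h1 : (j : ℕ) % 3 = 1
        · refine ⟨(u₀, some ⟨i, ⟨(j : ℕ) - 1, by omega⟩⟩), hmemE _ _ (by simp; omega),
            Or.inr (starlike_adj_branch _ _ _ ?_)⟩
          left; simp; omega
        · have h2 : (j : ℕ) % 3 = 2 := by omega
          have hlt : (j : ℕ) + 1 < nb i := by have := hnb i; omega
          refine ⟨(u₀, some ⟨i, ⟨(j : ℕ) + 1, hlt⟩⟩), hmemE _ _ (by simp; omega),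
            Or.inr (starlike_adj_branch _ _ _ ?_)⟩
          right; simp
    refine le_trans (dominationNumber_le' _ E hEdom) ?_
    rw [hE]
    refine le_trans (Finset.card_biUnion_le) ?_
    refine Finset.sum_le_sum (fun i _ => ?_)
    rw [Finset.card_image_of_injective _
      (fun a b h => some_sigma_inj (congrArg Prod.snd h)), card_filter_mod3]
  -- combine: domination number equals the sum, minimality forces equalities
  have hDcard : D.card = (D.filter (fun p => p.2 = none)).card + ∑ i, (Di D i).card :=
    card_partition D
  have hsumle : ∑ i : Fin l, (nb i + 2) / 3 ≤ ∑ i, (Di D i).card :=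
    Finset.sum_le_sum (fun i _ => hlow D hdom i)
  have hDle : D.card ≤ ∑ i : Fin l, (nb i + 2) / 3 := hmin ▸ hub
  have hC0 : (D.filter (fun p => p.2 = none)).card = 0 := by omega
  have hsumeq : ∑ i, (Di D i).card = ∑ i : Fin l, (nb i + 2) / 3 := by omega
  have heach : ∀ i : Fin l, (Di D i).card = (nb i + 2) / 3 := by
    have := (Finset.sum_eq_sum_iff_of_le (fun i _ => hlow D hdom i)).1 hsumeq.symm
    exact fun i => (this i (Finset.mem_univ i)).symm
  have hCempty : D.filter (fun p => p.2 = none) = ∅ := Finset.card_eq_zero.1 hC0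
  have hnone : ∀ d ∈ D, d.2 ≠ none := by
    intro d hd hdn
    have : d ∈ D.filter (fun p => p.2 = none) := Finset.mem_filter.2 ⟨hd, hdn⟩
    rw [hCempty] at this
    exact absurd this (Finset.notMem_empty d)
  refine ⟨hCempty, fun i => ?_⟩
  have hdom' := (top_strongProd_isDominating_iff _ D).1 hdom
  have hDidom : ((⊤ : SimpleGraph (Fin m)) ⊠ pathGraph (nb i)).IsDominatingSet ↑(Di D i) := by
    rw [top_strongProd_isDominating_iff]
    intro j
    obtain ⟨d, hd, hcl⟩ := hdom' (some ⟨i, j⟩)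
    rcases hcl with h | h
    · refine ⟨(d.1, j), ?_, Or.inl rfl⟩
      rw [hDi, Finset.mem_filter]
      refine ⟨Finset.mem_univ _, ?_⟩
      show (d.1, some ⟨i, j⟩) ∈ D
      rw [← h]
      exact hd
    · rcases starlike_adj_inv h with ⟨hdn, -⟩ | ⟨k, hdk, hadj⟩
      · exact absurd hdn (hnone d hd)
      · refine ⟨(d.1, k), ?_, Or.inr ?_⟩
        · rw [hDi, Finset.mem_filter]
          refine ⟨Finset.mem_univ _, ?_⟩
          show (d.1, some ⟨i, k⟩) ∈ D
          rw [← hdk]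
          exact hd
        · show (pathGraph (nb i)).Adj k j
          rw [pathGraph_adj]
          omega
  refine ⟨hDidom, ?_, heach i⟩
  rw [heach i, pathProd_dominationNumber hm (hnb i)]
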